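/- arXiv:1108.1880 — 3 statements merged into one kernel-verified Lean document; each statement's English description precedes it below -/
import Mathlib

section
/- A commutative supertropical monoid U is a supertropical semiring (i.e., the forced addition is associative and distributive) if and only if the following condition holds: for all x, y, z in U, if 0 < ex < ey (in the ordered ghost ideal eU) and exz = eyz, then yz = eyz (i.e., yz lies in eU). -/
universe u v w

class STM (U : Type u) extends CommMonoid U, Zero U where
  zero_mul' : ∀ x : U, 0 * x = 0
  e : U
  e_idem : e * e = e
  ghost_zero : ∀ x : U, e * x = 0 → x = 0
  le : U → U → Prop
  le_refl : ∀ x : U, le x x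
  le_trans : ∀ x y z : U, le x y → le y z → le x z
  le_total : ∀ x y : U, le x y ∨ le y x
  le_antisymm : ∀ x y : U, e * x = x → e * y = y → le x y → le y x → x = y
  le_e : ∀ x y : U, le x y ↔ le (e * x) (e * y)
  mul_le_mul : ∀ x y z : U, le x y → le (x * z) (y * z)
  zero_le : ∀ x : U, le 0 x

namespace STM

variable {U : Type u} [STM U]

/-- `x` is a ghost element, i.e. `x ∈ eU`. -/
def Ghost (x : U) : Prop := e * x = x

/-- strict inequality for the ordering of the ghost ideal -/
def slt (x y : U) : Prop := le x y ∧ ¬ le y x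

open scoped Classical in
/-- the forced addition on a supertropical monoid -/
noncomputable def add (x y : U) : U :=
  if slt (e * x) (e * y) then y
  else if slt (e * y) (e * x) then x
  else e * x

/-- the supertropical monoid `U` "is" a (supertropical) semiring: the forced
addition is associative and distributive. -/
def IsSemiring (U : Type u) [STM U] : Prop :=
  (∀ x y z : U, add (add x y) z = add x (add y z)) ∧
  (∀ x y z : U, add x y * z = add (x * z) (y * z))

end STM

open STM

/-- A transmission between supertropical monoids. -/
structure IsTransmission {U : Type u} {V : Type v} [STM U] [STM V] (α : U → V) : Prop where
  map_zero : α 0 = 0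
  map_one : α 1 = 1
  map_mul : ∀ x y : U, α (x * y) = α x * α y
  map_e : α (STM.e : U) = (STM.e : V)
  mono : ∀ x y : U, Ghost x → Ghost y → STM.le x y → STM.le (α x) (α y)

/-!
Associativity of the forced addition holds in every supertropical monoid: it is `max` for the
ghost order, with ties collapsing to the ghost value, and a three-way comparison settles each
case. For distributivity only the case `ex < ey` is interesting: then `(x + y) z = yz`, while
`exz ≤ eyz` and `xz + yz` equals `yz` unless `exz = eyz`, when it is the ghost `eyz`. So
distributivity at `(x, y, z)` is exactly condition (Dis); when `ex = 0` the condition holds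
anyway, since then `yz` vanishes.
-/

namespace STM

variable {U : Type u} [STM U]

lemma e_mul_e_mul (x : U) : e * (e * x) = e * x := by
  rw [← mul_assoc, e_idem]

lemma e_mul_zero : e * (0 : U) = 0 := by
  rw [mul_comm, zero_mul']

lemma slt_irrefl (x : U) : ¬ slt x x := fun h => h.2 h.1

lemma slt_asymm {x y : U} (h : slt x y) : ¬ slt y x := fun h' => h.2 h'.1

lemma slt_trans {x y z : U} (hxy : slt x y) (hyz : slt y z) : slt x z :=
  ⟨le_trans _ _ _ hxy.1 hyz.1, fun hzx => hyz.2 (le_trans _ _ _ hzx hxy.1)⟩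

lemma le_of_not_slt {x y : U} (h : ¬ slt x y) : le y x := by
  by_contra hyx
  exact h ⟨(le_total x y).resolve_right hyx, hyx⟩

lemma trichotomy (x y : U) :
    slt (e * x) (e * y) ∨ e * x = e * y ∨ slt (e * y) (e * x) := by
  by_cases hxy : slt (e * x) (e * y)
  · exact Or.inl hxy
  by_cases hyx : slt (e * y) (e * x)
  · exact Or.inr (Or.inr hyx)
  exact Or.inr (Or.inl (le_antisymm _ _ (e_mul_e_mul x) (e_mul_e_mul y)
    (le_of_not_slt hyx) (le_of_not_slt hxy)))

lemma e_mul_eq_zero_of_not_pos {x : U} (h : ¬ slt 0 (e * x)) : e * x = 0 :=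
  le_antisymm _ _ (e_mul_e_mul x) e_mul_zero (le_of_not_slt h) (zero_le _)

lemma add_eq_right_of_slt {x y : U} (h : slt (e * x) (e * y)) : add x y = y := by
  rw [add, if_pos h]

lemma add_eq_left_of_slt {x y : U} (h : slt (e * y) (e * x)) : add x y = x := by
  rw [add, if_neg (slt_asymm h), if_pos h]

lemma add_eq_e_mul_of_eq {x y : U} (h : e * x = e * y) : add x y = e * x := by
  rw [add, if_neg (h ▸ slt_irrefl _), if_neg (h ▸ slt_irrefl _)]

protected lemma add_comm (x y : U) : add x y = add y x := by
  rcases trichotomy x y with h | h | h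
  · rw [add_eq_right_of_slt h, add_eq_left_of_slt h]
  · rw [add_eq_e_mul_of_eq h, add_eq_e_mul_of_eq h.symm, h]
  · rw [add_eq_left_of_slt h, add_eq_right_of_slt h]

protected lemma add_assoc (x y z : U) : add (add x y) z = add x (add y z) := by
  rcases trichotomy x y with hxy | hxy | hxy
  · rw [add_eq_right_of_slt hxy]
    rcases trichotomy y z with hyz | hyz | hyz
    · rw [add_eq_right_of_slt hyz, add_eq_right_of_slt (slt_trans hxy hyz)]
    · rw [add_eq_e_mul_of_eq hyz, add_eq_right_of_slt (y := e * y) (by rwa [e_mul_e_mul])]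
    · rw [add_eq_left_of_slt hyz, add_eq_right_of_slt hxy]
  · rw [add_eq_e_mul_of_eq hxy]
    rcases trichotomy y z with hyz | hyz | hyz
    · rw [add_eq_right_of_slt (x := e * x) (by rwa [e_mul_e_mul, hxy]), add_eq_right_of_slt hyz,
        add_eq_right_of_slt (hxy ▸ hyz)]
    · rw [add_eq_e_mul_of_eq (x := e * x) (by rwa [e_mul_e_mul, hxy]), add_eq_e_mul_of_eq hyz,
        add_eq_e_mul_of_eq (y := e * y) (by rwa [e_mul_e_mul]), e_mul_e_mul]
    · rw [add_eq_left_of_slt (x := e * x) (by rwa [e_mul_e_mul, hxy]), add_eq_left_of_slt hyz,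
        add_eq_e_mul_of_eq hxy]
  · rw [add_eq_left_of_slt hxy]
    rcases trichotomy y z with hyz | hyz | hyz
    · rw [add_eq_right_of_slt hyz]
    · rw [add_eq_e_mul_of_eq hyz, add_eq_left_of_slt (y := e * y) (by rwa [e_mul_e_mul]),
        add_eq_left_of_slt (hyz ▸ hxy)]
    · rw [add_eq_left_of_slt hyz, add_eq_left_of_slt hxy, add_eq_left_of_slt (slt_trans hyz hxy)]

lemma add_mul_of_e_mul_eq {x y : U} (h : e * x = e * y) (z : U) :
    add x y * z = add (x * z) (y * z) := by
  rw [add_eq_e_mul_of_eq h, add_eq_e_mul_of_eq (by rw [← mul_assoc, ← mul_assoc, h]), mul_assoc]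

lemma add_mul_eq_iff_of_slt {x y : U} (z : U) (h : slt (e * x) (e * y)) :
    add x y * z = add (x * z) (y * z) ↔ (e * x * z = e * y * z → y * z = e * (y * z)) := by
  have hmono : le (e * (x * z)) (e * (y * z)) := by
    simpa only [mul_assoc] using mul_le_mul _ _ z h.1
  rw [add_eq_right_of_slt h]
  rcases trichotomy (x * z) (y * z) with hz | hz | hz
  · rw [add_eq_right_of_slt hz]
    refine iff_of_true rfl fun heq => absurd hz ?_
    simp only [← mul_assoc, heq, slt_irrefl, not_false_eq_true]
  · rw [add_eq_e_mul_of_eq hz, hz]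
    simp only [← mul_assoc] at hz
    simp only [hz, forall_const]
  · exact absurd hmono hz.2

end STM

open STM

/-- A commutative supertropical monoid is a supertropical semiring iff condition (Dis) holds:
whenever `0 < ex < ey` and `exz = eyz`, then `yz = eyz`, i.e. `yz ∈ eU`. -/
theorem stm_is_semiring_iff {U : Type u} [STM U] :
    IsSemiring U ↔
      ∀ x y z : U, slt 0 (STM.e * x) → slt (STM.e * x) (STM.e * y) →
        STM.e * x * z = STM.e * y * z → y * z = STM.e * (y * z) := by
  constructor
  · rintro ⟨-, hdistrib⟩ x y z - hxy
    exact (add_mul_eq_iff_of_slt z hxy).1 (hdistrib x y z)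
  · intro hdis
    refine ⟨STM.add_assoc, fun x y z => ?_⟩
    have hslt : ∀ {x y : U}, slt (e * x) (e * y) → add x y * z = add (x * z) (y * z) := by
      intro x y hxy
      refine (add_mul_eq_iff_of_slt z hxy).2 fun heq => ?_
      by_cases hx : slt 0 (e * x)
      · exact hdis x y z hx hxy heq
      · have hyz : y * z = 0 := ghost_zero _ <| by
          rw [← mul_assoc, ← heq, e_mul_eq_zero_of_not_pos hx, zero_mul']
        rw [hyz, e_mul_zero]
    rcases trichotomy x y with h | h | h
    · exact hslt h
    · exact add_mul_of_e_mul_eq h z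
    · rw [STM.add_comm x, STM.add_comm (x * z)]
      exact hslt h
end

section
/- Let U be an ordered supertropical monoid, V a supertropical monoid, and α: U → V a surjective transmission such that every fiber α⁻¹(p), p ∈ V, is convex in U. Then V, equipped with the total ordering induced by α (i.e., α(x) < α(y) implies x < y implies α(x) ≤ α(y)), is an ordered supertropical monoid. -/
universe u v w

open STM

/-- `r` makes the supertropical monoid `U` an ordered supertropical monoid. -/
structure IsOST {U : Type u} [STM U] (r : U → U → Prop) : Prop where
  refl : ∀ x : U, r x x
  trans : ∀ x y z : U, r x y → r y z → r x z
  antisymm : ∀ x y : U, r x y → r y x → x = y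
  total : ∀ x y : U, r x y ∨ r y x
  mul_right : ∀ x y z : U, r x y → r (x * z) (y * z)
  restrict : ∀ x y : U, Ghost x → Ghost y → (r x y ↔ STM.le x y)
  zero_one : r 0 1
  one_e : r 1 (STM.e : U)

/-!
The induced relation is the image `Relation.Map rU α α`. Convexity of the fibers makes it
well defined: if `x ≤ y` in `U` but `y' ≤ x'` for other representatives of the same classes, then
totality puts a representative of one class between two representatives of the other, so the
classes coincide. Hence `α x ≤ α y` in `V` iff `x ≤ y` or `α x = α y`, and the order axioms
descend along `α`. On ghosts the induced order agrees with the given one: `x ↦ x * e` fixes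
`α x` when `α x` is a ghost and lands in the ghost ideal of `U`, where `α` is monotone.
-/

namespace Relation

variable {X : Type u} {Y : Type v} {r : X → X → Prop} {f : X → Y}

theorem map_apply_apply_iff (hrefl : ∀ x, r x x) (htotal : ∀ x y, r x y ∨ r y x)
    (hconv : ∀ x y z, f x = f y → r x z → r z y → f z = f x) {x y : X} :
    Relation.Map r f f (f x) (f y) ↔ r x y ∨ f x = f y := by
  constructor
  · rintro ⟨x', y', hr, hx, hy⟩
    refine (htotal x y).imp_right fun hyx => ?_
    rcases htotal y' x with hy'x | hxy'
    · rw [← hx, ← hy, hconv x' x y' hx hr hy'x]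
    · exact hconv y y' x hy.symm hyx hxy'
  · rintro (hxy | hxy)
    · exact ⟨x, y, hxy, rfl, rfl⟩
    · exact ⟨x, x, hrefl x, rfl, hxy⟩

theorem map_refl (hsurj : f.Surjective) (hrefl : ∀ x, r x x) (p : Y) :
    Relation.Map r f f p p := by
  obtain ⟨x, rfl⟩ := hsurj p
  exact ⟨x, x, hrefl x, rfl, rfl⟩

theorem map_total (hsurj : f.Surjective) (htotal : ∀ x y, r x y ∨ r y x) (p q : Y) :
    Relation.Map r f f p q ∨ Relation.Map r f f q p := by
  obtain ⟨x, rfl⟩ := hsurj p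
  obtain ⟨y, rfl⟩ := hsurj q
  exact (htotal x y).imp (fun h => ⟨x, y, h, rfl, rfl⟩) (fun h => ⟨y, x, h, rfl, rfl⟩)

theorem map_trans_of_convex (hsurj : f.Surjective) (hrefl : ∀ x, r x x)
    (htotal : ∀ x y, r x y ∨ r y x) (htrans : ∀ x y z, r x y → r y z → r x z)
    (hconv : ∀ x y z, f x = f y → r x z → r z y → f z = f x) (p q s : Y) :
    Relation.Map r f f p q → Relation.Map r f f q s → Relation.Map r f f p s := by
  obtain ⟨x, rfl⟩ := hsurj p
  obtain ⟨y, rfl⟩ := hsurj q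
  obtain ⟨z, rfl⟩ := hsurj s
  intro hxy hyz
  rcases (map_apply_apply_iff hrefl htotal hconv).mp hyz with hyz | hyz
  · rcases (map_apply_apply_iff hrefl htotal hconv).mp hxy with hxy | hxy
    · exact ⟨x, z, htrans x y z hxy hyz, rfl, rfl⟩
    · exact hxy ▸ ⟨y, z, hyz, rfl, rfl⟩
  · exact hyz ▸ hxy

theorem map_antisymm_of_convex (hsurj : f.Surjective) (hrefl : ∀ x, r x x)
    (htotal : ∀ x y, r x y ∨ r y x) (hantisymm : ∀ x y, r x y → r y x → x = y)
    (hconv : ∀ x y z, f x = f y → r x z → r z y → f z = f x) (p q : Y) :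
    Relation.Map r f f p q → Relation.Map r f f q p → p = q := by
  obtain ⟨x, rfl⟩ := hsurj p
  obtain ⟨y, rfl⟩ := hsurj q
  simp only [map_apply_apply_iff hrefl htotal hconv]
  rintro (hxy | hxy) (hyx | hyx)
  · rw [hantisymm x y hxy hyx]
  · exact hyx.symm
  all_goals exact hxy

theorem map_mul_right [Mul X] [Mul Y] (hsurj : f.Surjective)
    (hf : ∀ x y, f (x * y) = f x * f y) (hr : ∀ x y z, r x y → r (x * z) (y * z)) (p q s : Y) :
    Relation.Map r f f p q → Relation.Map r f f (p * s) (q * s) := by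
  rintro ⟨x, y, hxy, rfl, rfl⟩
  obtain ⟨z, rfl⟩ := hsurj s
  exact ⟨x * z, y * z, hr x y z hxy, hf x z, hf y z⟩

theorem eq_map_of_antisymm (hsurj : f.Surjective) (hrefl : ∀ x, r x x)
    (htotal : ∀ x y, r x y ∨ r y x) {s : Y → Y → Prop}
    (hs_antisymm : ∀ p q, s p q → s q p → p = q) (hs : ∀ x y, r x y → s (f x) (f y)) :
    s = Relation.Map r f f := by
  ext p q
  refine ⟨fun hpq => ?_, fun ⟨x, y, hxy, hx, hy⟩ => hx ▸ hy ▸ hs x y hxy⟩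
  rcases map_total hsurj htotal p q with hmap | ⟨y, x, hyx, rfl, rfl⟩
  · exact hmap
  · rw [hs_antisymm _ _ hpq (hs y x hyx)]
    exact map_refl hsurj hrefl _

end Relation

namespace STM

variable {U : Type u} [STM U]

theorem ghost_mul_e (x : U) : Ghost (x * e) := by
  rw [Ghost, mul_comm x e, ← mul_assoc, e_idem]

theorem rel_iff_le_of_forall_ghost_rel_imp_le {s : U → U → Prop} (hrefl : ∀ x, s x x)
    (htotal : ∀ x y, s x y ∨ s y x) (hle : ∀ x y, Ghost x → Ghost y → s x y → le x y)
    {x y : U} (hx : Ghost x) (hy : Ghost y) :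
    s x y ↔ le x y := by
  refine ⟨hle x y hx hy, fun hxy => ?_⟩
  rcases htotal x y with hsxy | hsyx
  · exact hsxy
  · obtain rfl := le_antisymm x y hx hy hxy (hle y x hy hx hsyx)
    exact hrefl x

end STM

theorem IsTransmission.le_of_rel {U : Type u} {V : Type v} [STM U] [STM V] {rU : U → U → Prop}
    (hrU : IsOST rU) {α : U → V} (hα : IsTransmission α) {x y : U}
    (hx : Ghost (α x)) (hy : Ghost (α y)) (hxy : rU x y) : STM.le (α x) (α y) := by
  have hαe : ∀ z, Ghost (α z) → α (z * STM.e) = α z := fun z hz => by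
    rw [hα.map_mul, hα.map_e, mul_comm]
    exact hz
  have hle : STM.le (x * STM.e) (y * STM.e) :=
    (hrU.restrict _ _ (ghost_mul_e x) (ghost_mul_e y)).mp (hrU.mul_right x y STM.e hxy)
  simpa only [hαe x hx, hαe y hy] using hα.mono _ _ (ghost_mul_e x) (ghost_mul_e y) hle

theorem IsOST.map {U : Type u} {V : Type v} [STM U] [STM V] {rU : U → U → Prop}
    (hrU : IsOST rU) {α : U → V} (hα : IsTransmission α) (hsurj : Function.Surjective α)
    (hconv : ∀ x y z : U, α x = α y → rU x z → rU z y → α z = α x) :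
    IsOST (Relation.Map rU α α) where
  refl := Relation.map_refl hsurj hrU.refl
  trans := Relation.map_trans_of_convex hsurj hrU.refl hrU.total hrU.trans hconv
  antisymm := Relation.map_antisymm_of_convex hsurj hrU.refl hrU.total hrU.antisymm hconv
  total := Relation.map_total hsurj hrU.total
  mul_right := Relation.map_mul_right hsurj hα.map_mul hrU.mul_right
  restrict _ _ := STM.rel_iff_le_of_forall_ghost_rel_imp_le (Relation.map_refl hsurj hrU.refl)
    (Relation.map_total hsurj hrU.total)
    (fun _ _ hp hq ⟨_, _, hxy, hx, hy⟩ => hx ▸ hy ▸ hα.le_of_rel hrU (hx ▸ hp) (hy ▸ hq) hxy)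
  zero_one := ⟨0, 1, hrU.zero_one, hα.map_zero, hα.map_one⟩
  one_e := ⟨1, STM.e, hrU.one_e, hα.map_one, hα.map_e⟩

/-- If `α : U → V` is a surjective transmission from an ordered supertropical monoid with
all fibers convex, then `V` carries a (unique) total ordering induced by `α` making it an
ordered supertropical monoid. -/
theorem ost_induced_order {U : Type u} {V : Type v} [STM U] [STM V]
    (rU : U → U → Prop) (hrU : IsOST rU) (α : U → V) (hα : IsTransmission α)
    (hsurj : Function.Surjective α)
    (hconv : ∀ x y z : U, α x = α y → rU x z → rU z y → α z = α x) :
    ∃! rV : V → V → Prop, IsOST rV ∧ ∀ x y : U, rU x y → rV (α x) (α y) := by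
  refine ⟨Relation.Map rU α α, ⟨hrU.map hα hsurj hconv, fun x y hxy => ⟨x, y, hxy, rfl, rfl⟩⟩, ?_⟩
  rintro rV ⟨hrV, hα_mono⟩
  exact Relation.eq_map_of_antisymm hsurj hrU.refl hrU.total hrV.antisymm hα_mono
end

section
/- Let v: R → M be an m-valuation on a semiring R with support 𝔮 = v⁻¹(0). Define U⁰(v) as the set (R \ 𝔮) ⊔ M with multiplication: x·y = xy (in R) if x, y, xy ∈ R \ 𝔮; x·y = 0 if x, y ∈ R \ 𝔮 and xy ∈ 𝔮; x·y = v(x)·y (in M) if x ∈ R \ 𝔮, y ∈ M; x·y computed in M if x, y ∈ M. Then U⁰(v) is a supertropical monoid with e = 1_M, and the map φ⁰_v: R → U⁰(v), sending a ∈ R \ 𝔮 to a and a ∈ 𝔮 to 0_M, is a surjective m-supervaluation covering v that dominates every other m-supervaluation covering v. -/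
universe u v w

open STM

/-- A bipotent semiring: a totally ordered commutative monoid with absorbing smallest
element `0`; addition is given by the maximum. -/
class Bipotent (M : Type v) extends CommMonoid M, Zero M, LinearOrder M where
  zero_mul' : ∀ x : M, 0 * x = 0
  zero_le' : ∀ x : M, 0 ≤ x
  mul_le_mul' : ∀ x y z : M, x ≤ y → x * z ≤ y * z

/-- An m-valuation on a semiring `R` with values in a bipotent semiring `M`. -/
def IsMVal {R : Type u} [CommSemiring R] {M : Type v} [Bipotent M] (v : R → M) : Prop :=
  v 0 = 0 ∧ v 1 = 1 ∧ (∀ a b : R, v (a * b) = v a * v b) ∧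
  (∀ a b : R, v (a + b) ≤ max (v a) (v b))

/-- An m-supervaluation with values in a supertropical monoid. -/
def IsMSuperval {R : Type u} [CommSemiring R] {V : Type v} [STM V] (ψ : R → V) : Prop :=
  ψ 0 = 0 ∧ ψ 1 = 1 ∧ (∀ a b : R, ψ (a * b) = ψ a * ψ b) ∧
  (∀ a b : R, STM.le (STM.e * ψ (a + b)) (STM.e * ψ a) ∨
    STM.le (STM.e * ψ (a + b)) (STM.e * ψ b))

/-- `ψ` covers the m-valuation `v` (the ghost map of `ψ` agrees with `v` up to the
canonical identification of the ghost ideal with `M`). -/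
def CoversOrd {R : Type u} [CommSemiring R] {M : Type v} [Bipotent M] {V : Type w} [STM V]
    (v : R → M) (ψ : R → V) : Prop :=
  ∀ a b : R, STM.le (STM.e * ψ a) (STM.e * ψ b) ↔ v a ≤ v b

/-- `φ` dominates `ψ`. -/
def Dominates {R : Type u} [CommSemiring R] {U : Type v} {V : Type w} [STM U] [STM V]
    (φ : R → U) (ψ : R → V) : Prop :=
  (∀ a b : R, φ a = φ b → ψ a = ψ b) ∧
  (∀ a b : R, STM.le (STM.e * φ a) (STM.e * φ b) → STM.le (STM.e * ψ a) (STM.e * ψ b)) ∧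
  (∀ a : R, Ghost (φ a) → Ghost (ψ a))

/-- Specification of the supertropical monoid `U⁰(v)` and of the m-supervaluation
`φ⁰_v : R → U⁰(v)`:  `U⁰(v) = (R ∖ 𝔮) ⊔ M` with the multiplication described in the
statement, `φ⁰_v` sends `a ∉ 𝔮` to itself and `a ∈ 𝔮` to `0`; it is a surjective
m-supervaluation covering `v` which dominates every m-supervaluation covering `v`. -/
def U0Spec {R M : Type u} [CommSemiring R] [Bipotent M] (v : R → M)
    {U : Type u} [STM U] (ι : M → U) (φ : R → U) : Prop :=
  -- `ι` identifies `M` with the ghost ideal of `U`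
  Function.Injective ι ∧
  (∀ m m' : M, ι (m * m') = ι m * ι m') ∧
  ι 0 = 0 ∧ ι 1 = (STM.e : U) ∧
  (∀ m m' : M, STM.le (ι m) (ι m') ↔ m ≤ m') ∧
  (∀ x : U, Ghost x ↔ ∃ m : M, ι m = x) ∧
  -- the underlying set of `U` is the disjoint union of `R ∖ 𝔮` and `M`
  (∀ x : U, (∃ m : M, ι m = x) ∨ ∃ a : R, v a ≠ 0 ∧ φ a = x) ∧
  (∀ a : R, v a = 0 → φ a = 0) ∧
  (∀ a : R, v a ≠ 0 → ¬ Ghost (φ a)) ∧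
  (∀ a b : R, v a ≠ 0 → v b ≠ 0 → (φ a = φ b ↔ a = b)) ∧
  -- multiplication in `U⁰(v)` as described in the statement
  (∀ a b : R, φ a * φ b = φ (a * b)) ∧
  (∀ a b : R, v (a * b) = 0 → φ a * φ b = 0) ∧
  (∀ (a : R) (m : M), φ a * ι m = ι (v a * m)) ∧
  -- `φ` covers `v`
  (∀ a : R, STM.e * φ a = ι (v a)) ∧
  -- `φ` is a (surjective) m-supervaluation
  IsMSuperval φ ∧
  -- `φ` dominates every m-supervaluation covering `v`
  (∀ (V : Type u) [STM V] (ψ : R → V), IsMSuperval ψ → CoversOrd v ψ → Dominates φ ψ)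

/-!
`U⁰(v)` is realised as `{a // v a ≠ 0} ⊕ M`, ordered through the ghost value `x ↦ ex ∈ M`.
Every element is either some `φ a` or a ghost `m`, and the products `φ a · φ b = φ (ab)`,
`φ a · m = v(a) m` reduce the monoid laws to those of `R` and `M` via multiplicativity of `v`.
Initiality: an m-supervaluation `ψ` covering `v` vanishes on the support of `v`
(`eψ(a) ≤ eψ(0) = 0`), while `φ` is injective off the support and non-ghost there.
-/

theorem Bipotent.mul_zero {M : Type v} [Bipotent M] (x : M) : x * 0 = 0 := by
  rw [mul_comm]; exact Bipotent.zero_mul' x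

namespace STM

variable {U : Type u} [STM U]

theorem mul_zero' (x : U) : x * 0 = 0 := by
  rw [mul_comm]; exact zero_mul' x

theorem ghost_e_mul (x : U) : Ghost (e * x) := by
  rw [Ghost, ← mul_assoc, e_idem]

theorem Ghost.zero : Ghost (0 : U) := mul_zero' _

theorem eq_zero_of_le_zero {x : U} (h : le x 0) : x = 0 := by
  rw [le_e, mul_zero'] at h
  exact ghost_zero _ (le_antisymm _ _ (ghost_e_mul x) Ghost.zero h (zero_le _))

end STM

theorem CoversOrd.eq_zero_of_eq_zero {R : Type u} [CommSemiring R] {M : Type v} [Bipotent M]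
    {V : Type w} [STM V] {v : R → M} {ψ : R → V} (hc : CoversOrd v ψ) (hv0 : v 0 = 0)
    (hψ0 : ψ 0 = 0) {a : R} (ha : v a = 0) : ψ a = 0 := by
  apply STM.eq_zero_of_le_zero
  rw [← hψ0, STM.le_e]
  exact (hc a 0).2 (by rw [ha, hv0])

section U0

variable {R : Type u} {M : Type v} [CommSemiring R] [Bipotent M] (v : R →* M)

abbrev U0 : Type (max u v) := {a : R // v a ≠ 0} ⊕ M

namespace U0

def ofR (a : R) : U0 v := if h : v a = 0 then Sum.inr 0 else Sum.inl ⟨a, h⟩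

variable {v}

def ghostVal : U0 v → M
  | .inl a => v a.1
  | .inr m => m

def mul : U0 v → U0 v → U0 v
  | .inl a, .inl b => ofR v (a.1 * b.1)
  | .inl a, .inr m => .inr (v a.1 * m)
  | .inr m, .inl a => .inr (m * v a.1)
  | .inr m, .inr n => .inr (m * n)

theorem inl_eq_ofR (a : {a : R // v a ≠ 0}) : (Sum.inl a : U0 v) = ofR v a.1 := by
  rw [ofR, dif_neg a.2]

theorem ofR_of_eq_zero {a : R} (h : v a = 0) : ofR v a = .inr 0 := dif_pos h

@[elab_as_elim]
theorem induction_on {p : U0 v → Prop} (x : U0 v) (ofR : ∀ a, p (ofR v a))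
    (inr : ∀ m, p (.inr m)) : p x := by
  rcases x with a | m
  · rw [inl_eq_ofR]; exact ofR a.1
  · exact inr m

theorem ghostVal_ofR (a : R) : ghostVal (ofR v a) = v a := by
  by_cases h : v a = 0
  · rw [ofR_of_eq_zero h, h]; rfl
  · rw [ofR, dif_neg h]; rfl

theorem ghostVal_inr (m : M) : ghostVal (.inr m : U0 v) = m := rfl

theorem mul_ofR_inr (a : R) (m : M) : mul (ofR v a) (.inr m) = .inr (v a * m) := by
  by_cases h : v a = 0
  · rw [ofR_of_eq_zero h, h, mul, Bipotent.zero_mul']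
  · rw [ofR, dif_neg h, mul]

theorem mul_inr_ofR (m : M) (a : R) : mul (.inr m) (ofR v a) = .inr (m * v a) := by
  by_cases h : v a = 0
  · rw [ofR_of_eq_zero h, h, mul, Bipotent.mul_zero]
  · rw [ofR, dif_neg h, mul]

theorem mul_inr_inr (m n : M) : mul (.inr m : U0 v) (.inr n) = .inr (m * n) := rfl

theorem mul_ofR_ofR (a b : R) : mul (ofR v a) (ofR v b) = ofR v (a * b) := by
  by_cases ha : v a = 0
  · rw [ofR_of_eq_zero ha, mul_inr_ofR, Bipotent.zero_mul',
      ofR_of_eq_zero (by rw [map_mul, ha, Bipotent.zero_mul'])]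
  by_cases hb : v b = 0
  · rw [ofR_of_eq_zero hb, mul_ofR_inr, Bipotent.mul_zero,
      ofR_of_eq_zero (by rw [map_mul, hb, Bipotent.mul_zero])]
  rw [ofR, dif_neg ha, ofR, dif_neg hb, mul]

theorem mul_comm' (x y : U0 v) : mul x y = mul y x := by
  induction x using induction_on <;> induction y using induction_on <;>
    simp only [mul_ofR_ofR, mul_ofR_inr, mul_inr_ofR, mul_inr_inr, mul_comm]

theorem mul_assoc' (x y z : U0 v) : mul (mul x y) z = mul x (mul y z) := by
  induction x using induction_on <;> induction y using induction_on <;>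
    induction z using induction_on <;>
    simp only [mul_ofR_ofR, mul_ofR_inr, mul_inr_ofR, mul_inr_inr, map_mul, mul_assoc,
      mul_comm, mul_left_comm]

theorem one_mul' (x : U0 v) : mul (ofR v 1) x = x := by
  induction x using induction_on <;> simp only [mul_ofR_ofR, mul_ofR_inr, one_mul, map_one]

theorem ghostVal_mul (x y : U0 v) : ghostVal (mul x y) = ghostVal x * ghostVal y := by
  induction x using induction_on <;> induction y using induction_on <;>
    simp only [mul_ofR_ofR, mul_ofR_inr, mul_inr_ofR, mul_inr_inr, ghostVal_ofR, ghostVal_inr,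
      map_mul]

theorem e_mul' (x : U0 v) : mul (.inr 1) x = .inr (ghostVal x) := by
  induction x using induction_on <;>
    simp only [mul_inr_ofR, mul_inr_inr, one_mul, ghostVal_ofR, ghostVal_inr]

theorem inr_zero_mul (x : U0 v) : mul (.inr 0) x = .inr 0 := by
  induction x using induction_on <;>
    simp only [mul_inr_ofR, mul_inr_inr, Bipotent.zero_mul']

theorem eq_inr_zero_of_ghostVal_eq_zero {x : U0 v} (h : ghostVal x = 0) : x = .inr 0 := by
  rcases x with a | m
  · exact absurd h a.2
  · exact congrArg Sum.inr h

instance : STM (U0 v) where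
  mul := mul
  mul_assoc := mul_assoc'
  one := ofR v 1
  one_mul := one_mul'
  mul_one x := (mul_comm' x _).trans (one_mul' x)
  mul_comm := mul_comm'
  zero := .inr 0
  zero_mul' := inr_zero_mul
  e := .inr 1
  e_idem := congrArg Sum.inr (one_mul 1)
  ghost_zero x h := eq_inr_zero_of_ghostVal_eq_zero (Sum.inr_injective ((e_mul' x).symm.trans h))
  le x y := ghostVal x ≤ ghostVal y
  le_refl _ := le_rfl
  le_trans _ _ _ := le_trans
  le_total _ _ := le_total _ _
  le_antisymm x y hx hy hxy hyx := by
    rw [← hx, ← hy]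
    exact (e_mul' x).trans ((congrArg Sum.inr (le_antisymm hxy hyx)).trans (e_mul' y).symm)
  le_e x y := by
    change _ ↔ ghostVal (mul _ x) ≤ ghostVal (mul _ y)
    rw [e_mul', e_mul', ghostVal_inr, ghostVal_inr]
  mul_le_mul x y z h := by
    change ghostVal (mul x z) ≤ ghostVal (mul y z)
    rw [ghostVal_mul, ghostVal_mul]
    exact Bipotent.mul_le_mul' _ _ _ h
  zero_le _ := Bipotent.zero_le' _

theorem ofR_mul (a b : R) : ofR v (a * b) = ofR v a * ofR v b := (mul_ofR_ofR a b).symm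

theorem e_mul (x : U0 v) : e * x = .inr (ghostVal x) := e_mul' x

theorem e_mul_ofR (a : R) : e * ofR v a = .inr (v a) := by
  rw [e_mul, ghostVal_ofR]

theorem inr_le_inr_iff {m n : M} : le (.inr m : U0 v) (.inr n) ↔ m ≤ n := Iff.rfl

theorem ghost_iff (x : U0 v) : Ghost x ↔ ∃ m, .inr m = x := by
  rw [Ghost, e_mul]
  exact ⟨fun h => ⟨_, h⟩, fun ⟨m, hm⟩ => hm ▸ rfl⟩

theorem not_ghost_ofR {a : R} (h : v a ≠ 0) : ¬ Ghost (ofR v a) := by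
  rw [Ghost, e_mul_ofR, ofR, dif_neg h]
  exact Sum.inr_ne_inl

theorem ofR_eq_ofR_iff {a b : R} : ofR v a = ofR v b ↔ a = b ∨ v a = 0 ∧ v b = 0 := by
  by_cases ha : v a = 0 <;> by_cases hb : v b = 0 <;>
    simp only [ofR, ha, hb, ↓reduceDIte, reduceCtorEq, Sum.inl.injEq, Subtype.mk.injEq, and_self,
      and_true, and_false, or_true, or_false, false_iff] <;>
    rintro rfl <;> contradiction

theorem isMSuperval_ofR (hv0 : v 0 = 0) (hadd : ∀ a b, v (a + b) ≤ max (v a) (v b)) :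
    IsMSuperval (ofR v) :=
  ⟨ofR_of_eq_zero hv0, rfl, ofR_mul, fun a b => by
    simpa only [e_mul_ofR, inr_le_inr_iff] using le_max_iff.1 (hadd a b)⟩

theorem ofR_dominates {V : Type w} [STM V] {ψ : R → V} (hv0 : v 0 = 0) (hψ0 : ψ 0 = 0)
    (hc : CoversOrd v ψ) : Dominates (ofR v) ψ := by
  have hψ : ∀ a, v a = 0 → ψ a = 0 := fun a => hc.eq_zero_of_eq_zero hv0 hψ0
  refine ⟨fun a b hab => ?_, fun a b hab => ?_, fun a ha => ?_⟩
  · obtain rfl | ⟨ha, hb⟩ := ofR_eq_ofR_iff.1 hab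
    · rfl
    · rw [hψ a ha, hψ b hb]
  · rw [e_mul_ofR, e_mul_ofR, inr_le_inr_iff] at hab
    exact (hc a b).2 hab
  · by_cases h : v a = 0
    · rw [hψ a h]
      exact Ghost.zero
    · exact absurd ha (not_ghost_ofR h)

end U0

end U0

theorem U0.u0Spec {R M : Type u} [CommSemiring R] [Bipotent M] (v : R →* M) (hv0 : v 0 = 0)
    (hadd : ∀ a b, v (a + b) ≤ max (v a) (v b)) : U0Spec v Sum.inr (ofR v) :=
  ⟨Sum.inr_injective, fun _ _ => rfl, rfl, rfl, fun _ _ => Iff.rfl, ghost_iff,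
    fun | .inl a => .inr ⟨a.1, a.2, (inl_eq_ofR a).symm⟩ | .inr m => .inl ⟨m, rfl⟩,
    fun _ => ofR_of_eq_zero, fun _ => not_ghost_ofR,
    fun _ _ ha _ => by simp [ofR_eq_ofR_iff, ha],
    fun a b => (ofR_mul a b).symm, fun a b hab => by rw [← ofR_mul, ofR_of_eq_zero hab]; rfl,
    mul_ofR_inr, e_mul_ofR, isMSuperval_ofR hv0 hadd,
    fun _ _ _ hψ hc => ofR_dominates hv0 hψ.1 hc⟩

theorem initial_m_supervaluation_exists_general {R M : Type u} [CommSemiring R] [Bipotent M]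
    (v : R → M) (hv : IsMVal v) :
    ∃ (U : Type u) (sU : STM U) (ι : M → U) (φ : R → U),
      @U0Spec R M _ _ v U sU ι φ := by
  obtain ⟨hv0, hv1, hvmul, hvadd⟩ := hv
  let w : R →* M := ⟨⟨v, hv1⟩, hvmul⟩
  exact ⟨U0 w, inferInstance, Sum.inr, U0.ofR w, U0.u0Spec w hv0 hvadd⟩

/-- Existence of the initial m-supervaluation `φ⁰_v : R → U⁰(v)` covering `v`. -/
theorem initial_m_supervaluation_exists {R M : Type u} [CommSemiring R] [Bipotent M]
    (v : R → M) (hv : IsMVal v) (hsurj : Function.Surjective v) :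
    ∃ (U : Type u) (sU : STM U) (ι : M → U) (φ : R → U),
      @U0Spec R M _ _ v U sU ι φ :=
  initial_m_supervaluation_exists_general v hv
end
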